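/- Let K be a sextic number field, c ∈ K nonzero, and E: y^2 = x^3 + c. Then E(K)[3] ≅ ℤ/3ℤ ⊕ ℤ/3ℤ if and only if 4c is a cube in K and both c and −3 are squares in K (equivalently ω ∈ K). -/

import Mathlib

open WeierstrassCurve WeierstrassCurve.Affine Polynomial

set_option linter.unusedSectionVars false
set_option linter.unusedVariables false
set_option maxHeartbeats 1000000

/-- The Mordell curve `y² = x³ + c` as a Weierstrass curve in affine form. -/
def mordell {K : Type*} [CommRing K] (c : K) : WeierstrassCurve.Affine K :=
  { a₁ := 0, a₂ := 0, a₃ := 0, a₄ := 0, a₆ := c }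

section Mordell
variable {K : Type*} [Field K] [CharZero K] [DecidableEq K] {c : K}

lemma mordell_equation {x y : K} :
    (mordell c).Equation x y ↔ y ^ 2 = x ^ 3 + c := by
  rw [WeierstrassCurve.Affine.equation_iff]
  simp [mordell]

lemma mordell_negY (x y : K) : (mordell c).negY x y = -y := by
  simp [WeierstrassCurve.Affine.negY, mordell]

lemma mordell_nonsingular (hc : c ≠ 0) {x y : K} (h : y ^ 2 = x ^ 3 + c) :
    (mordell c).Nonsingular x y := by
  rw [WeierstrassCurve.Affine.nonsingular_iff]
  refine ⟨mordell_equation.mpr h, ?_⟩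
  simp only [mordell, zero_mul, mul_zero, zero_add, add_zero, sub_zero, zero_sub]
  by_cases hx : x = 0
  · right
    subst hx
    intro hy
    have hy0 : y = 0 := by
      have h2 : (2 : K) * y = 0 := by linear_combination hy
      rcases mul_eq_zero.mp h2 with h | h
      · exact absurd h two_ne_zero
      · exact h
    apply hc; rw [hy0] at h; simpa using h.symm
  · left
    intro h3
    apply hx
    have : (3 : K) * x ^ 2 = 0 := h3.symm
    rcases mul_eq_zero.mp this with h' | h'
    · exact absurd h' three_ne_zero
    · exact pow_eq_zero_iff (n := 2) (by norm_num) |>.mp h'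

/-- coordinates of a point -/
def coords : (mordell c).Point → Option (K × K) :=
  fun P => match P with
  | .zero => none
  | @WeierstrassCurve.Affine.Point.some _ _ _ x y _ => Option.some (x, y)

lemma coords_some {x y : K} (h : (mordell c).Nonsingular x y) :
    coords (.some _ _ h) = Option.some (x, y) := rfl

lemma some_eq_some_iff {x₁ y₁ x₂ y₂ : K} (h₁ : (mordell c).Nonsingular x₁ y₁)
    (h₂ : (mordell c).Nonsingular x₂ y₂) :
    Point.some _ _ h₁ = Point.some _ _ h₂ ↔ x₁ = x₂ ∧ y₁ = y₂ := by
  constructor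
  · intro h
    have := congrArg coords h
    rw [coords_some, coords_some] at this
    simpa using this
  · rintro ⟨rfl, rfl⟩
    rfl

lemma mordell_neg_some {x y : K} (h : (mordell c).Nonsingular x y) :
    -Point.some _ _ h = Point.some _ _ (((mordell c).nonsingular_neg _ _).mpr h) := rfl

lemma mordell_y_ne_negY {x y : K} (hy : y ≠ 0) : y ≠ (mordell c).negY x y := by
  rw [mordell_negY]
  intro hcon
  apply hy
  have h2 : (2 : K) * y = 0 := by linear_combination hcon
  rcases mul_eq_zero.mp h2 with h | h
  · exact absurd h two_ne_zero
  · exact h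

lemma mordell_three_torsion (hc : c ≠ 0) {x y : K} (h : (mordell c).Nonsingular x y) :
    (3 : ℤ) • (Point.some _ _ h : (mordell c).Point) = 0 ↔
      y ≠ 0 ∧ x * (x ^ 3 + 4 * c) = 0 := by
  have heq : y ^ 2 = x ^ 3 + c := mordell_equation.mp h.1
  have h3 : (3 : ℤ) • (Point.some _ _ h : (mordell c).Point)
      = Point.some _ _ h + Point.some _ _ h + Point.some _ _ h := by
    rw [show (3 : ℤ) = 1 + 1 + 1 by norm_num, add_smul, add_smul, one_smul]
  by_cases hy : y = 0
  · subst hy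
    rw [h3, Point.add_self_of_Y_eq (by rw [mordell_negY]; ring), zero_add]
    simp [Point.some_ne_zero h]
  · have hyne : y ≠ (mordell c).negY x y := mordell_y_ne_negY hy
    have h2y : (2 : K) * y ≠ 0 := mul_ne_zero two_ne_zero hy
    have hLval : (mordell c).slope x x y y = 3 * x ^ 2 / (2 * y) := by
      rw [slope_of_Y_ne rfl hyne, mordell_negY]
      simp [mordell]
      ring_nf
    have haddX : (mordell c).addX x x ((mordell c).slope x x y y)
        = (3 * x ^ 2 / (2 * y)) ^ 2 - 2 * x := by
      rw [hLval]; simp [WeierstrassCurve.Affine.addX, mordell]; ring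
    rw [h3, Point.add_self_of_Y_ne hyne, add_eq_zero_iff_eq_neg, mordell_neg_some,
      some_eq_some_iff]
    constructor
    · rintro ⟨hx, -⟩
      refine ⟨hy, ?_⟩
      rw [haddX] at hx
      field_simp at hx
      linear_combination (-(1 : K)/3) * hx + (-4 * x) * heq
    · rintro ⟨-, hroot⟩
      have hxeq : (mordell c).addX x x ((mordell c).slope x x y y) = x := by
        rw [haddX]
        field_simp
        linear_combination (-3 : K) * hroot - 12 * x * heq
      refine ⟨hxeq, ?_⟩
      rw [WeierstrassCurve.Affine.addY, WeierstrassCurve.Affine.negAddY, hxeq, mordell_negY,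
        mordell_negY]
      ring

lemma mordell_mem_ker_iff {P : (mordell c).Point} :
    P ∈ AddMonoidHom.ker (smulAddHom ℤ (mordell c).Point (3 : ℤ)) ↔ (3 : ℤ) • P = 0 := by
  simp [AddMonoidHom.mem_ker]

lemma ker_point_exists (hc : c ≠ 0) {P : (mordell c).Point}
    (hP : P ∈ AddMonoidHom.ker (smulAddHom ℤ (mordell c).Point (3 : ℤ))) (h0 : P ≠ 0) :
    ∃ (x y : K) (h : (mordell c).Nonsingular x y), P = Point.some _ _ h ∧ y ≠ 0 ∧
      x * (x ^ 3 + 4 * c) = 0 ∧ y ^ 2 = x ^ 3 + c := by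
  rw [mordell_mem_ker_iff] at hP
  cases P with
  | zero => exact absurd rfl h0
  | @some x y h =>
    obtain ⟨hy, hroot⟩ := (mordell_three_torsion hc h).mp hP
    exact ⟨x, y, h, rfl, hy, hroot, mordell_equation.mp h.1⟩

lemma x_ne_of (hc : c ≠ 0) {x₁ y₁ x₂ y₂ : K} (h₁ : (mordell c).Nonsingular x₁ y₁)
    (h₂ : (mordell c).Nonsingular x₂ y₂)
    (hne : Point.some _ _ h₁ ≠ Point.some _ _ h₂) (hne' : Point.some _ _ h₁ ≠ -Point.some _ _ h₂) :
    x₁ ≠ x₂ := by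
  intro hx
  rcases WeierstrassCurve.Affine.Y_eq_of_X_eq h₁.1 h₂.1 hx with hy | hy
  · exact hne ((some_eq_some_iff h₁ h₂).mpr ⟨hx, hy⟩)
  · exact hne' (by rw [mordell_neg_some, some_eq_some_iff]; exact ⟨hx, hy⟩)

end Mordell

section Card
variable {K : Type*} [Field K] [CharZero K] [DecidableEq K] {c : K}

lemma card_ker_eq_nine (hc : c ≠ 0) {a e f : K} (ha : a ^ 3 = 4 * c) (he : c = e * e)
    (hf : (-3 : K) = f * f) :
    Nat.card (AddMonoidHom.ker (smulAddHom ℤ (mordell c).Point (3 : ℤ))) = 9 := by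
  have he0 : e ≠ 0 := fun h => hc (by rw [he, h, mul_zero])
  have hf0 : f ≠ 0 := by
    intro h
    rw [h, mul_zero] at hf
    exact (by norm_num : (-3 : K) ≠ 0) hf
  have ha0 : a ≠ 0 := by
    intro h
    rw [h] at ha
    apply hc
    have h4 : (4 : K) * c = 0 := by rw [← ha]; ring
    rcases mul_eq_zero.mp h4 with h' | h'
    · exact absurd h' (by norm_num)
    · exact h'
  set ω : K := (-1 + f) / 2 with hωdef
  have hω2 : ω ^ 2 + ω + 1 = 0 := by
    rw [hωdef]; linear_combination (-(1:K)/4) * hf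
  have hω3 : ω ^ 3 = 1 := by linear_combination (ω - 1) * hω2
  have hω0 : ω ≠ 0 := by intro h; rw [h] at hω2; norm_num at hω2
  have hωne1 : (1 : K) ≠ ω := by
    intro h; rw [← h] at hω2; norm_num at hω2
  have hωsqne1 : (1 : K) ≠ ω ^ 2 := by
    intro h
    have h2 : ω = -2 := by linear_combination hω2 + h
    rw [h2] at h; norm_num at h
  have hωneω2 : ω ≠ ω ^ 2 := by
    intro h
    have h2 : 2 * ω + 1 = 0 := by linear_combination hω2 + h
    have h3 : (3 : K) = 0 := by linear_combination 4 * hω2 - (2 * ω + 1) * h2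
    norm_num at h3
  set xv : Fin 4 → K := ![0, -a, -a * ω, -a * ω ^ 2] with hxv
  set yv : Fin 4 → K := ![e, f * e, f * e, f * e] with hyv
  set ys : Bool → Fin 4 → K := fun s j => if s then yv j else -yv j with hys
  have hyv0 : ∀ j, yv j ≠ 0 := by
    intro j
    fin_cases j <;> simp [hyv] <;> simp [he0, hf0]
  have hys0 : ∀ s j, ys s j ≠ 0 := by
    intro s j
    cases s <;> simp [hys] <;> simp [hyv0 j]
  have heqv : ∀ j : Fin 4, (yv j) ^ 2 = (xv j) ^ 3 + c := by
    intro j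
    fin_cases j <;> simp [hxv, hyv]
    · linear_combination -he
    · linear_combination (-e * e) * hf + ha + 3 * he
    · linear_combination (-e * e) * hf + ha + 3 * he + a ^ 3 * hω3
    · linear_combination (-e * e) * hf + ha + 3 * he + a ^ 3 * (ω ^ 3 + 1) * hω3
  have heqv' : ∀ (s : Bool) (j : Fin 4), (ys s j) ^ 2 = (xv j) ^ 3 + c := by
    intro s j
    cases s <;> simpa [hys] using heqv j
  have hnsv : ∀ (s : Bool) (j : Fin 4), (mordell c).Nonsingular (xv j) (ys s j) :=
    fun s j => mordell_nonsingular hc (heqv' s j)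
  have hrootv : ∀ j : Fin 4, xv j * ((xv j) ^ 3 + 4 * c) = 0 := by
    intro j
    fin_cases j <;> simp [hxv]
    · right; linear_combination -ha
    · right; linear_combination -a ^ 3 * hω3 - ha
    · right; linear_combination (-a ^ 3 * (ω ^ 3 + 1)) * hω3 - ha
  have hmem : ∀ (s : Bool) (j : Fin 4),
      Point.some _ _ (hnsv s j) ∈ AddMonoidHom.ker (smulAddHom ℤ (mordell c).Point (3 : ℤ)) := by
    intro s j
    rw [mordell_mem_ker_iff, mordell_three_torsion hc]
    exact ⟨hys0 s j, hrootv j⟩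
  set F : Option (Bool × Fin 4) → AddMonoidHom.ker (smulAddHom ℤ (mordell c).Point (3 : ℤ)) :=
    fun t => match t with
    | none => 0
    | some (s, j) => ⟨Point.some _ _ (hnsv s j), hmem s j⟩ with hF
  -- distinctness of x-values
  have hxvinj : ∀ j j' : Fin 4, xv j = xv j' → j = j' := by
    have d1 : -a ≠ 0 := neg_ne_zero.mpr ha0
    have d2 : -a * ω ≠ 0 := mul_ne_zero d1 hω0
    have d3 : -a * ω ^ 2 ≠ 0 := mul_ne_zero d1 (pow_ne_zero 2 hω0)
    have d4 : -a ≠ -a * ω := by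
      intro h; exact hωne1 (mul_left_cancel₀ d1 (by rw [mul_one]; exact h))
    have d5 : -a ≠ -a * ω ^ 2 := by
      intro h; exact hωsqne1 (mul_left_cancel₀ d1 (by rw [mul_one]; exact h))
    have d6 : -a * ω ≠ -a * ω ^ 2 := by
      intro h; exact hωneω2 (mul_left_cancel₀ d1 h)
    have n3 : ¬ (a = a * ω) := fun h => hωne1 (mul_left_cancel₀ ha0 (by linear_combination h))
    have n4 : ¬ (a = a * ω ^ 2) := fun h => hωsqne1 (mul_left_cancel₀ ha0 (by linear_combination h))
    have n5 : ¬ (a * ω = a) := fun h => n3 h.symm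
    have n6 : ¬ (ω = ω ^ 2) := hωneω2
    have n7 : ¬ (a * ω ^ 2 = a) := fun h => n4 h.symm
    have n8 : ¬ (ω ^ 2 = ω) := fun h => hωneω2 h.symm
    have n1 : ¬ (a = 0) := ha0
    have n2 : ¬ (ω = 0) := hω0
    intro j j' hxx
    fin_cases j <;> fin_cases j' <;> first | rfl | (simp [hxv] at hxx; tauto)
  have hFinj : Function.Injective F := by
    intro t t' h
    match t, t' with
    | none, none => rfl
    | none, some (s, j) =>
      exact absurd (congrArg Subtype.val h).symm (Point.some_ne_zero (hnsv s j))
    | some (s, j), none =>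
      exact absurd (congrArg Subtype.val h) (Point.some_ne_zero (hnsv s j))
    | some (s, j), some (s', j') =>
      have hval : Point.some _ _ (hnsv s j) = Point.some _ _ (hnsv s' j') := congrArg Subtype.val h
      obtain ⟨hx, hy⟩ := (some_eq_some_iff _ _).mp hval
      obtain rfl := hxvinj j j' hx
      congr 1
      cases s <;> cases s' <;> simp [hys] at hy <;> first
        | rfl
        | (exfalso; apply hyv0 j;
           have h2 : (2 : K) * yv j = 0 := by first | linear_combination hy | linear_combination -hy
           rcases mul_eq_zero.mp h2 with h' | h'
           · exact absurd h' two_ne_zero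
           · exact h')
  have hFsurj : Function.Surjective F := by
    rintro ⟨P, hPmem⟩
    by_cases hP0 : P = 0
    · exact ⟨none, Subtype.ext hP0.symm⟩
    obtain ⟨x, y, h, rfl, hy, hroot, heq⟩ := ker_point_exists hc hPmem hP0
    by_cases hx : x = 0
    · have hyc : (y - e) * (y + e) = 0 := by
        linear_combination heq + he + x ^ 2 * hx
      rcases mul_eq_zero.mp hyc with h' | h'
      · refine ⟨some (true, 0), ?_⟩
        apply Subtype.ext
        show Point.some _ _ (hnsv true 0) = Point.some _ _ h
        rw [some_eq_some_iff]
        constructor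
        · simp [hxv]; exact hx.symm
        · simp [hys, hyv]; linear_combination -h'
      · refine ⟨some (false, 0), ?_⟩
        apply Subtype.ext
        show Point.some _ _ (hnsv false 0) = Point.some _ _ h
        rw [some_eq_some_iff]
        constructor
        · simp [hxv]; exact hx.symm
        · simp [hys, hyv]; linear_combination -h'
    · have hx3 : x ^ 3 + 4 * c = 0 := (mul_eq_zero.mp hroot).resolve_left hx
      have hyc : (y - f * e) * (y + f * e) = 0 := by
        linear_combination heq + hx3 + c * hf + f ^ 2 * he
      have hfac : (x + a) * ((x + a * ω) * (x + a * ω ^ 2)) = 0 := by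
        linear_combination hx3 + (a * x ^ 2 + a ^ 2 * x) * hω2 + (a ^ 2 * x + a ^ 3) * hω3 + ha
      have hxcase : x = -a ∨ x = -a * ω ∨ x = -a * ω ^ 2 := by
        rcases mul_eq_zero.mp hfac with h' | h'
        · left; linear_combination h'
        · rcases mul_eq_zero.mp h' with h'' | h''
          · right; left; linear_combination h''
          · right; right; linear_combination h''
      have hycase : y = f * e ∨ y = -(f * e) := by
        rcases mul_eq_zero.mp hyc with h' | h'
        · left; linear_combination h'
        · right; linear_combination h'
      have hxj : ∃ j : Fin 4, xv j = x ∧ yv j = f * e := by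
        rcases hxcase with hh | hh | hh
        · exact ⟨1, by simp [hxv]; exact hh.symm, by simp [hyv]⟩
        · exact ⟨2, by simp [hxv]; linear_combination -hh, by simp [hyv]⟩
        · exact ⟨3, by simp [hxv]; linear_combination -hh, by simp [hyv]⟩
      obtain ⟨j, hxj, hyvj⟩ := hxj
      rcases hycase with h' | h'
      · refine ⟨some (true, j), Subtype.ext ?_⟩
        show Point.some _ _ (hnsv true j) = Point.some _ _ h
        rw [some_eq_some_iff]
        refine ⟨hxj, ?_⟩
        simp [hys, hyvj]; exact h'.symm
      · refine ⟨some (false, j), Subtype.ext ?_⟩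
        show Point.some _ _ (hnsv false j) = Point.some _ _ h
        rw [some_eq_some_iff]
        refine ⟨hxj, ?_⟩
        simp [hys, hyvj]; linear_combination -h'
  have h9 : Nat.card (Option (Bool × Fin 4)) = 9 := by
    simp [Nat.card_eq_fintype_card]
  exact ((Nat.card_congr (Equiv.ofBijective F ⟨hFinj, hFsurj⟩)).symm).trans h9
end Card

open Classical in
theorem stmt_18 (K : Type*) [Field K] [NumberField K]
    (hdeg : Module.finrank ℚ K = 6) (c : K) (hc : c ≠ 0) :
    Nonempty ((AddMonoidHom.ker (smulAddHom ℤ (mordell c).Point (3 : ℤ))) ≃+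
      (ZMod 3 × ZMod 3)) ↔
    ((∃ a : K, a ^ 3 = 4 * c) ∧ IsSquare c ∧ IsSquare (-3 : K)) := by
  constructor
  · rintro ⟨E⟩
    have key : ∀ v : ZMod 3 × ZMod 3, v ≠ 0 → ∃ (x y : K)
        (h : (mordell c).Nonsingular x y),
        ((E.symm v : AddMonoidHom.ker (smulAddHom ℤ (mordell c).Point (3 : ℤ))) :
          (mordell c).Point) = Point.some _ _ h ∧ y ≠ 0 ∧
        x * (x ^ 3 + 4 * c) = 0 ∧ y ^ 2 = x ^ 3 + c := by
      intro v hv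
      apply ker_point_exists hc (E.symm v).2
      intro h0
      apply hv
      have h1 : E.symm v = 0 := Subtype.ext h0
      calc v = E (E.symm v) := (E.apply_symm_apply v).symm
        _ = E 0 := by rw [h1]
        _ = 0 := map_zero E
    have hxne : ∀ (v w : ZMod 3 × ZMod 3) {x y x' y' : K}
        (h : (mordell c).Nonsingular x y) (h' : (mordell c).Nonsingular x' y'),
        v ≠ w → v ≠ -w →
        ((E.symm v : AddMonoidHom.ker (smulAddHom ℤ (mordell c).Point (3 : ℤ))) :
          (mordell c).Point) = Point.some _ _ h →
        ((E.symm w : AddMonoidHom.ker (smulAddHom ℤ (mordell c).Point (3 : ℤ))) :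
          (mordell c).Point) = Point.some _ _ h' → x ≠ x' := by
      intro v w x y x' y' h h' hvw hvw' hPv hPw
      refine x_ne_of hc h h' ?_ ?_
      · intro heqp
        apply hvw
        have h2 : (E.symm v) = E.symm w := Subtype.ext (by rw [hPv, hPw, heqp])
        have := congrArg E h2
        rwa [E.apply_symm_apply, E.apply_symm_apply] at this
      · intro heqp
        apply hvw'
        have h2 : (E.symm v) = -(E.symm w) := Subtype.ext (by
          push_cast
          rw [hPv, hPw, heqp])
        have h3 : (E.symm v) = E.symm (-w) := by rw [map_neg]; exact h2
        have := congrArg E h3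
        rwa [E.apply_symm_apply, E.apply_symm_apply] at this
    obtain ⟨x₁, y₁, h₁, hP₁, hy₁, hr₁, he₁⟩ := key (1, 0) (by decide)
    obtain ⟨x₂, y₂, h₂, hP₂, hy₂, hr₂, he₂⟩ := key (0, 1) (by decide)
    obtain ⟨x₃, y₃, h₃, hP₃, hy₃, hr₃, he₃⟩ := key (1, 1) (by decide)
    obtain ⟨x₄, y₄, h₄, hP₄, hy₄, hr₄, he₄⟩ := key (1, 2) (by decide)
    have ne12 : x₁ ≠ x₂ := hxne _ _ h₁ h₂ (by decide) (by decide) hP₁ hP₂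
    have ne13 : x₁ ≠ x₃ := hxne _ _ h₁ h₃ (by decide) (by decide) hP₁ hP₃
    have ne14 : x₁ ≠ x₄ := hxne _ _ h₁ h₄ (by decide) (by decide) hP₁ hP₄
    have ne23 : x₂ ≠ x₃ := hxne _ _ h₂ h₃ (by decide) (by decide) hP₂ hP₃
    have ne24 : x₂ ≠ x₄ := hxne _ _ h₂ h₄ (by decide) (by decide) hP₂ hP₄
    have ne34 : x₃ ≠ x₄ := hxne _ _ h₃ h₄ (by decide) (by decide) hP₃ hP₄
    have hcube : ∃ x y : K, y ≠ 0 ∧ x ^ 3 = -(4 * c) ∧ y ^ 2 = x ^ 3 + c := by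
      by_cases hx1 : x₁ = 0
      · have hx2 : x₂ ≠ 0 := fun h => ne12 (hx1.trans h.symm)
        have h5 := (mul_eq_zero.mp hr₂).resolve_left hx2
        exact ⟨x₂, y₂, hy₂, by linear_combination h5, he₂⟩
      · have h5 := (mul_eq_zero.mp hr₁).resolve_left hx1
        exact ⟨x₁, y₁, hy₁, by linear_combination h5, he₁⟩
    have hzero : ∃ y0 : K, y0 ≠ 0 ∧ y0 ^ 2 = c := by
      by_contra hno
      push_neg at hno
      have hxi : ∀ {x y : K}, y ≠ 0 → y ^ 2 = x ^ 3 + c → x * (x ^ 3 + 4 * c) = 0 →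
          x ^ 3 = -(4 * c) := by
        intro x y hy heq hr
        have hx0 : x ≠ 0 := by
          intro h; apply hno y hy; rw [h] at heq; simpa using heq
        have h5 := (mul_eq_zero.mp hr).resolve_left hx0
        linear_combination h5
      have c1 := hxi hy₁ he₁ hr₁
      have c2 := hxi hy₂ he₂ hr₂
      have c3 := hxi hy₃ he₃ hr₃
      have c4 := hxi hy₄ he₄ hr₄
      have s12 : x₁ ^ 2 + x₁ * x₂ + x₂ ^ 2 = 0 := by
        have hmul : (x₁ - x₂) * (x₁ ^ 2 + x₁ * x₂ + x₂ ^ 2) = 0 := by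
          linear_combination c1 - c2
        exact (mul_eq_zero.mp hmul).resolve_left (sub_ne_zero.mpr ne12)
      have s13 : x₁ ^ 2 + x₁ * x₃ + x₃ ^ 2 = 0 := by
        have hmul : (x₁ - x₃) * (x₁ ^ 2 + x₁ * x₃ + x₃ ^ 2) = 0 := by
          linear_combination c1 - c3
        exact (mul_eq_zero.mp hmul).resolve_left (sub_ne_zero.mpr ne13)
      have s14 : x₁ ^ 2 + x₁ * x₄ + x₄ ^ 2 = 0 := by
        have hmul : (x₁ - x₄) * (x₁ ^ 2 + x₁ * x₄ + x₄ ^ 2) = 0 := by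
          linear_combination c1 - c4
        exact (mul_eq_zero.mp hmul).resolve_left (sub_ne_zero.mpr ne14)
      have t3 : x₁ + x₂ + x₃ = 0 := by
        have hmul : (x₂ - x₃) * (x₁ + x₂ + x₃) = 0 := by linear_combination s12 - s13
        exact (mul_eq_zero.mp hmul).resolve_left (sub_ne_zero.mpr ne23)
      have t4 : x₁ + x₂ + x₄ = 0 := by
        have hmul : (x₂ - x₄) * (x₁ + x₂ + x₄) = 0 := by linear_combination s12 - s14
        exact (mul_eq_zero.mp hmul).resolve_left (sub_ne_zero.mpr ne24)
      exact ne34 (by linear_combination t3 - t4)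
    obtain ⟨y0, hy00, hy0c⟩ := hzero
    obtain ⟨x, y, hy, hx3, hyx⟩ := hcube
    refine ⟨⟨-x, by linear_combination -hx3⟩, ⟨y0, by linear_combination -hy0c⟩,
      ⟨y / y0, ?_⟩⟩
    have hkey : y ^ 2 = -3 * y0 ^ 2 := by linear_combination hyx + hx3 + 3 * hy0c
    field_simp
    linear_combination -hkey
  · rintro ⟨⟨a, ha⟩, ⟨e, he⟩, ⟨f, hf⟩⟩
    have hcard := card_ker_eq_nine hc ha he hf
    set G := AddMonoidHom.ker (smulAddHom ℤ (mordell c).Point (3 : ℤ)) with hG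
    letI : Module (ZMod 3) G := AddCommGroup.zmodModule (n := 3) (by
      intro x
      have hx : (3 : ℤ) • (x : (mordell c).Point) = 0 := mordell_mem_ker_iff.mp x.2
      rw [show (3 : ℤ) = 1 + 1 + 1 by norm_num, add_smul, add_smul, one_smul] at hx
      have h3 : (3 : ℕ) • x = x + x + x := by
        rw [show (3 : ℕ) = 1 + 1 + 1 from rfl, add_nsmul, add_nsmul, one_nsmul]
      rw [h3]
      apply Subtype.ext
      push_cast
      exact hx)
    haveI hfinG : Finite G := by
      have hpos : 0 < Nat.card G := by rw [hcard]; norm_num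
      exact (Nat.card_pos_iff.mp hpos).2
    haveI : Module.Finite (ZMod 3) G := Module.Finite.of_finite
    have hrk : Module.finrank (ZMod 3) G = 2 := by
      haveI : Fintype G := Fintype.ofFinite G
      have h1 : Fintype.card G = 3 ^ Module.finrank (ZMod 3) G := by
        simpa [ZMod.card] using Module.card_eq_pow_finrank (K := ZMod 3) (V := G)
      have h2 : Fintype.card G = 9 := by rw [← Nat.card_eq_fintype_card, hcard]
      have h3 : (3 : ℕ) ^ Module.finrank (ZMod 3) G = 3 ^ 2 := by
        rw [← h1, h2]; norm_num
      exact Nat.pow_right_injective (by norm_num) h3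
    have hrk2 : Module.finrank (ZMod 3) (ZMod 3 × ZMod 3) = 2 := by
      rw [Module.finrank_prod, Module.finrank_self]
    exact (FiniteDimensional.nonempty_linearEquiv_of_finrank_eq
      (hrk.trans hrk2.symm)).map fun eq => eq.toAddEquiv
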